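/- arXiv:1403.4597 — 2 statements merged into one kernel-verified Lean document; each statement's English description precedes it below -/
import Mathlib

section
/- Lemma 4 (water-level structure under KKT, time-varying channel): Suppose (r*, l*, λ, μ) satisfies the time-varying KKT conditions. Then: (a) for every epoch n with l*_n > 0, one has w_n ≥ e^{r_ee(g_n)}/g_n and r*_n = log(g_n w_n); (b) if n ∈ {1, …, N−1} satisfies w_{n+1} > w_n, then there exists i with α_i = n, λ_i > 0, and Σ_{m=1}^{α_i} r*_m l*_m = Σ_{k=0}^{i−1} a_k; and if w_{n+1} < w_n, then there exists j with δ_j = n, μ_j > 0, and Σ_{m=1}^{δ_j} r*_m l*_m = Σ_{k=1}^{j} d_k. -/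
open Real Finset

/-- Transmit-power function `P(r) = (e^r - 1)/g` for channel power gain `g`. -/
noncomputable def P (g r : ℝ) : ℝ := (Real.exp r - 1) / g

/-- Energy-efficiency (energy-per-bit) ratio `ξ(r) = (P(r) + ρ)/r`. -/
noncomputable def xi (g ρ r : ℝ) : ℝ := (P g r + ρ) / r

/-- Scheduling data: `N ≥ 1` epochs of positive lengths, arrival epoch indices
`0 = α_0 < α_1 < ⋯ < α_A = N` with positive arrival amounts `a_0, …, a_{A-1}` and `a_A = 0`,
deadline epoch indices `0 < δ_1 < ⋯ < δ_D = N` with positive demands `d_1, …, d_D`. -/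
def SchedData (N A D : ℕ) (L : ℕ → ℝ) (α : ℕ → ℕ) (a : ℕ → ℝ)
    (δ : ℕ → ℕ) (d : ℕ → ℝ) : Prop :=
  1 ≤ N ∧ (∀ n ∈ Finset.Icc 1 N, 0 < L n) ∧
  α 0 = 0 ∧ α A = N ∧ (∀ i < A, α i < α (i + 1)) ∧
  (∀ i < A, 0 < a i) ∧ a A = 0 ∧
  0 < δ 1 ∧ δ D = N ∧ (∀ j, 1 ≤ j → j < D → δ j < δ (j + 1)) ∧
  (∀ j ∈ Finset.Icc 1 D, 0 < d j)

/-- Feasibility of a schedule `(r, l)`: box constraints, causality constraints and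
deadline constraints. -/
def Feasible (N A D : ℕ) (L : ℕ → ℝ) (α : ℕ → ℕ) (a : ℕ → ℝ)
    (δ : ℕ → ℕ) (d : ℕ → ℝ) (r l : ℕ → ℝ) : Prop :=
  (∀ n ∈ Finset.Icc 1 N, 0 ≤ r n ∧ 0 ≤ l n ∧ l n ≤ L n) ∧
  (∀ i ∈ Finset.Icc 1 A, ∑ n ∈ Finset.Icc 1 (α i), r n * l n ≤ ∑ k ∈ Finset.range i, a k) ∧
  (∀ j ∈ Finset.Icc 1 D, ∑ k ∈ Finset.Icc 1 j, d k ≤ ∑ n ∈ Finset.Icc 1 (δ j), r n * l n)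

/-- The weight (water-level) `w_n = Σ_{j : δ_j ≥ n} μ_j - Σ_{i : α_i ≥ n} λ_i`. -/
noncomputable def weight (A D : ℕ) (α : ℕ → ℕ) (δ : ℕ → ℕ) (lam μ : ℕ → ℝ) (n : ℕ) : ℝ :=
  ∑ j ∈ (Finset.Icc 1 D).filter (fun j => n ≤ δ j), μ j -
    ∑ i ∈ (Finset.Icc 1 A).filter (fun i => n ≤ α i), lam i

/-- Time-varying KKT conditions for problem (22): feasibility, nonnegative multipliers,
per-epoch Lagrangian minimality of `(r*_n, l*_n)` (with per-epoch gain `g n`), and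
complementary slackness. -/
def KKTtv (ρ : ℝ) (g : ℕ → ℝ) (N A D : ℕ) (L : ℕ → ℝ) (α : ℕ → ℕ) (a : ℕ → ℝ)
    (δ : ℕ → ℕ) (d : ℕ → ℝ) (rs ls lam μ : ℕ → ℝ) : Prop :=
  Feasible N A D L α a δ d rs ls ∧
  (∀ i ∈ Finset.Icc 1 A, 0 ≤ lam i) ∧
  (∀ j ∈ Finset.Icc 1 D, 0 ≤ μ j) ∧
  (∀ n ∈ Finset.Icc 1 N, ∀ r' l' : ℝ, 0 ≤ r' → 0 ≤ l' → l' ≤ L n →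
    (P (g n) (rs n) + ρ - weight A D α δ lam μ n * rs n) * ls n ≤
      (P (g n) r' + ρ - weight A D α δ lam μ n * r') * l') ∧
  (∀ i ∈ Finset.Icc 1 A,
    lam i * (∑ n ∈ Finset.Icc 1 (α i), rs n * ls n - ∑ k ∈ Finset.range i, a k) = 0) ∧
  (∀ j ∈ Finset.Icc 1 D,
    μ j * (∑ n ∈ Finset.Icc 1 (δ j), rs n * ls n - ∑ k ∈ Finset.Icc 1 j, d k) = 0)


private lemma sum_filter_split (s : Finset ℕ) (f : ℕ → ℕ) (v : ℕ → ℝ) (n : ℕ) :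
    ∑ x ∈ s.filter (fun x => n ≤ f x), v x =
      ∑ x ∈ s.filter (fun x => n + 1 ≤ f x), v x +
        ∑ x ∈ s.filter (fun x => f x = n), v x := by
  rw [← Finset.sum_union]
  · congr 1
    ext x
    simp only [Finset.mem_union, Finset.mem_filter]
    constructor
    · rintro ⟨hx, h⟩
      rcases Nat.lt_or_ge n (f x) with h' | h'
      · exact Or.inl ⟨hx, h'⟩
      · exact Or.inr ⟨hx, le_antisymm h' h⟩
    · rintro (⟨hx, h⟩ | ⟨hx, h⟩)
      · exact ⟨hx, le_of_lt h⟩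
      · exact ⟨hx, h.ge⟩
  · rw [Finset.disjoint_left]
    intro x h1 h2
    simp only [Finset.mem_filter] at h1 h2
    omega

/-- **Lemma 4** (water-level structure under KKT, time-varying channel).
Suppose `(rs, ls, lam, μ)` satisfies the time-varying KKT conditions. Then:
(a) for every epoch `n` with `ls n > 0`, the water-level satisfies
`w_n ≥ e^{r_ee(g n)}/g n` and `rs n = log (g n * w_n)`;
(b) if the water-level increases after epoch `n`, some arrival index `i` has `α i = n`,
`λ i > 0` and the `i`-th causality constraint tight; if it decreases, some deadline
index `j` has `δ j = n`, `μ j > 0` and the `j`-th deadline constraint tight. -/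
theorem lemma4_water_level
    (ρ : ℝ) (hρ : 0 < ρ)
    (N A D : ℕ) (g : ℕ → ℝ) (hg : ∀ n ∈ Finset.Icc 1 N, 0 < g n)
    (L : ℕ → ℝ) (α : ℕ → ℕ) (a : ℕ → ℝ) (δ : ℕ → ℕ) (d : ℕ → ℝ)
    (hdata : SchedData N A D L α a δ d)
    (ree : ℕ → ℝ)
    (hree_pos : ∀ n ∈ Finset.Icc 1 N, 0 < ree n)
    (hree_min : ∀ n ∈ Finset.Icc 1 N, ∀ r : ℝ, 0 < r → r ≠ ree n →
      xi (g n) ρ (ree n) < xi (g n) ρ r)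
    (rs ls lam μ : ℕ → ℝ)
    (hkkt : KKTtv ρ g N A D L α a δ d rs ls lam μ) :
    (∀ n ∈ Finset.Icc 1 N, 0 < ls n →
      Real.exp (ree n) / g n ≤ weight A D α δ lam μ n ∧
      rs n = Real.log (g n * weight A D α δ lam μ n)) ∧
    (∀ n : ℕ, 1 ≤ n → n + 1 ≤ N →
      (weight A D α δ lam μ n < weight A D α δ lam μ (n + 1) →
        ∃ i, 1 ≤ i ∧ i ≤ A ∧ α i = n ∧ 0 < lam i ∧
          ∑ m ∈ Finset.Icc 1 (α i), rs m * ls m = ∑ k ∈ Finset.range i, a k) ∧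
      (weight A D α δ lam μ (n + 1) < weight A D α δ lam μ n →
        ∃ j, 1 ≤ j ∧ j ≤ D ∧ δ j = n ∧ 0 < μ j ∧
          ∑ m ∈ Finset.Icc 1 (δ j), rs m * ls m = ∑ k ∈ Finset.Icc 1 j, d k)) := by
  obtain ⟨⟨hbox, hcaus, hdead⟩, hlam, hmu, hmin, hcsA, hcsD⟩ := hkkt
  constructor
  · -- part (a)
    intro n hn hls
    set w := weight A D α δ lam μ n with hwdef
    have hgn := hg n hn
    have hrs0 : 0 ≤ rs n := (hbox n hn).1
    have hlsL : ls n ≤ L n := (hbox n hn).2.2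
    have hLn : 0 < L n := hdata.2.1 n hn
    -- value of the Lagrangian integrand at the optimum is nonpositive
    have hF0 : (P (g n) (rs n) + ρ - w * rs n) * ls n ≤ 0 := by
      have h := hmin n hn 0 0 le_rfl le_rfl hLn.le
      simpa using h
    have hFrs : P (g n) (rs n) + ρ - w * rs n ≤ 0 := by
      by_contra h
      push_neg at h
      nlinarith [mul_pos h hls]
    have hFmin : ∀ r' : ℝ, 0 ≤ r' →
        P (g n) (rs n) + ρ - w * rs n ≤ P (g n) r' + ρ - w * r' := by
      intro r' hr'
      have h := hmin n hn r' (ls n) hr' hls.le hlsL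
      exact le_of_mul_le_mul_right h hls
    have hrs_pos : 0 < rs n := by
      rcases lt_or_eq_of_le hrs0 with h | h
      · exact h
      · exfalso
        rw [← h] at hFrs
        unfold P at hFrs
        rw [Real.exp_zero] at hFrs
        norm_num at hFrs
        linarith
    have hexpgt : rs n + 1 < Real.exp (rs n) := Real.add_one_lt_exp (ne_of_gt hrs_pos)
    have hcan : (Real.exp (rs n) - 1) / g n * g n = Real.exp (rs n) - 1 :=
      div_mul_cancel₀ _ (ne_of_gt hgn)
    have hFrs' : Real.exp (rs n) - 1 + g n * ρ ≤ g n * (w * rs n) := by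
      have h := hFrs
      unfold P at h
      nlinarith [mul_le_mul_of_nonneg_right h hgn.le, hcan]
    have hwpos : 0 < w := by
      nlinarith [mul_pos hrs_pos hgn, mul_pos hρ hgn]
    have hgw1 : 1 < g n * w := by
      nlinarith [mul_pos hρ hgn]
    have hgwpos : 0 < g n * w := by linarith
    set r₀ := Real.log (g n * w) with hr0def
    have hexpr0 : Real.exp r₀ = g n * w := Real.exp_log hgwpos
    have hr0nn : 0 ≤ r₀ := Real.log_nonneg hgw1.le
    have hFr : ∀ r : ℝ, P (g n) r + ρ - w * r =
        (Real.exp r - 1 + g n * ρ - g n * (w * r)) / g n := by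
      intro r
      unfold P
      field_simp
    have hrs_eq : rs n = r₀ := by
      by_contra hne
      have hne0 : rs n - r₀ ≠ 0 := by
        intro h0; apply hne; linarith
      have hkey : g n * w * (rs n - r₀ + 1) < Real.exp (rs n) := by
        have h := Real.add_one_lt_exp hne0
        have hsum : Real.exp (rs n) = Real.exp r₀ * Real.exp (rs n - r₀) := by
          rw [← Real.exp_add]; ring_nf
        have hmul := mul_lt_mul_of_pos_left h (Real.exp_pos r₀)
        rw [hexpr0] at hmul
        rw [hsum, hexpr0]
        linarith [hmul]
      have hlt : Real.exp r₀ - 1 + g n * ρ - g n * (w * r₀) <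
          Real.exp (rs n) - 1 + g n * ρ - g n * (w * (rs n)) := by
        rw [hexpr0]
        nlinarith [hkey]
      have hcontr : P (g n) r₀ + ρ - w * r₀ < P (g n) (rs n) + ρ - w * rs n := by
        rw [hFr r₀, hFr (rs n), div_lt_div_iff₀ hgn hgn]
        exact mul_lt_mul_of_pos_right hlt hgn
      have := hFmin r₀ hr0nn
      linarith
    have hrees : ree n ≤ rs n := by
      by_contra hlt
      push_neg at hlt
      have hne : rs n ≠ ree n := ne_of_lt hlt
      have hxi := hree_min n hn (rs n) hrs_pos hne
      unfold xi at hxi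
      have hrpos := hree_pos n hn
      set u := P (g n) (rs n) + ρ with hu
      set v := P (g n) (ree n) + ρ with hv
      have h1 : rs n * v < ree n * u := by
        rw [div_lt_div_iff₀ hrpos hrs_pos] at hxi
        nlinarith [hxi]
      have h2 : u ≤ w * rs n := by rw [hu]; linarith
      have h3 : u - w * rs n ≤ v - w * ree n := by
        have := hFmin (ree n) hrpos.le
        rw [hu, hv]; linarith
      nlinarith [mul_le_mul_of_nonneg_left h3 hrs_pos.le,
        mul_nonneg (sub_nonneg.2 hlt.le) (sub_nonneg.2 h2)]
    refine ⟨?_, hrs_eq⟩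
    rw [div_le_iff₀ hgn]
    have hle : Real.exp (ree n) ≤ Real.exp (rs n) := Real.exp_le_exp.mpr hrees
    rw [hrs_eq, hexpr0] at hle
    linarith
  · -- part (b)
    intro n hn1 hnN
    have hκ : weight A D α δ lam μ n - weight A D α δ lam μ (n + 1) =
        (∑ j ∈ (Finset.Icc 1 D).filter (fun j => δ j = n), μ j) -
          (∑ i ∈ (Finset.Icc 1 A).filter (fun i => α i = n), lam i) := by
      unfold weight
      rw [sum_filter_split (Finset.Icc 1 D) δ μ n, sum_filter_split (Finset.Icc 1 A) α lam n]
      ring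
    have hμnn : 0 ≤ ∑ j ∈ (Finset.Icc 1 D).filter (fun j => δ j = n), μ j :=
      Finset.sum_nonneg fun j hj => hmu j (Finset.mem_filter.mp hj).1
    have hlnn : 0 ≤ ∑ i ∈ (Finset.Icc 1 A).filter (fun i => α i = n), lam i :=
      Finset.sum_nonneg fun i hi => hlam i (Finset.mem_filter.mp hi).1
    constructor
    · intro hwlt
      have hpos : 0 < ∑ i ∈ (Finset.Icc 1 A).filter (fun i => α i = n), lam i := by
        linarith
      obtain ⟨i, hi, hlami⟩ :
          ∃ i ∈ (Finset.Icc 1 A).filter (fun i => α i = n), 0 < lam i := by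
        by_contra hc
        push_neg at hc
        have := Finset.sum_nonpos hc
        linarith
      obtain ⟨hiA, hαi⟩ := Finset.mem_filter.mp hi
      obtain ⟨hi1, hiA'⟩ := Finset.mem_Icc.mp hiA
      refine ⟨i, hi1, hiA', hαi, hlami, ?_⟩
      have hcs := hcsA i hiA
      rcases mul_eq_zero.mp hcs with h | h
      · exact absurd h (ne_of_gt hlami)
      · linarith [sub_eq_zero.mp h, le_of_eq h]
    · intro hwlt
      have hpos : 0 < ∑ j ∈ (Finset.Icc 1 D).filter (fun j => δ j = n), μ j := by
        linarith
      obtain ⟨j, hj, hμj⟩ :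
          ∃ j ∈ (Finset.Icc 1 D).filter (fun j => δ j = n), 0 < μ j := by
        by_contra hc
        push_neg at hc
        have := Finset.sum_nonpos hc
        linarith
      obtain ⟨hjD, hδj⟩ := Finset.mem_filter.mp hj
      obtain ⟨hj1, hjD'⟩ := Finset.mem_Icc.mp hjD
      refine ⟨j, hj1, hjD', hδj, hμj, ?_⟩
      have hcs := hcsD j hjD
      rcases mul_eq_zero.mp hcs with h | h
      · exact absurd h (ne_of_gt hμj)
      · linarith [sub_eq_zero.mp h]
end

section
/- Strict energy penalty of on-off transmission above the EE rate (equation (21)): If r_ee ≤ r̃ < r and l > 0, l̃ > 0 satisfy r·l = r̃·l̃ > 0, then (P(r) + ρ)·l > (P(r̃) + ρ)·l̃. That is, among strategies transmitting the same data amount at rates at least r_ee, the lower rate strictly reduces energy. -/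
open Real Finset

/-! The energy `(P(r) + ρ) l` equals `ξ(r) · r l`, so with equal data the claim is `ξ(r̃) < ξ(r)`.
As `P + ρ` is convex, its chord from `r_ee` to `r` lies below the line through the origin of
slope `ξ(r)` once `ξ(r_ee) < ξ(r)`, and hence so does `P(r̃) + ρ`. -/

theorem ConvexOn.div_lt_div_of_div_lt_div {s : Set ℝ} {f : ℝ → ℝ} (hf : ConvexOn ℝ s f)
    {a b c : ℝ} (ha : a ∈ s) (hc : c ∈ s) (ha_pos : 0 < a) (hab : a ≤ b) (hbc : b < c)
    (hac : f a / a < f c / c) : f b / b < f c / c := by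
  have hb_pos : 0 < b := ha_pos.trans_le hab
  have hc_pos : 0 < c := hb_pos.trans hbc
  have hca : 0 < c - a := by linarith
  set t := (c - b) / (c - a)
  set u := (b - a) / (c - a)
  have ht : 0 < t := div_pos (by linarith) hca
  have hu : 0 ≤ u := div_nonneg (by linarith) hca.le
  have htu : t + u = 1 := by
    rw [← add_div, div_eq_one_iff_eq hca.ne']; ring
  have hcomb : t * a + u * c = b := by
    simp only [t, u]; field_simp; ring
  have hchord : f b ≤ t * f a + u * f c := by
    simpa only [smul_eq_mul, hcomb] using hf.2 ha hc ht.le hu htu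
  have hfa : f a < a * (f c / c) := by rwa [div_lt_iff₀ ha_pos, mul_comm] at hac
  rw [div_lt_iff₀ hb_pos]
  calc f b ≤ t * f a + u * f c := hchord
    _ < t * (a * (f c / c)) + u * (c * (f c / c)) := by
        rw [mul_div_cancel₀ _ hc_pos.ne']
        gcongr
    _ = f c / c * b := by rw [← hcomb]; ring

theorem convexOn_P_add {g : ℝ} (hg : 0 < g) (ρ : ℝ) : ConvexOn ℝ Set.univ (fun r ↦ P g r + ρ) :=
  ((convexOn_exp.smul (inv_nonneg.2 hg.le)).add_const (ρ - g⁻¹)).congr fun r _ ↦ by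
    simp only [P, Pi.add_apply, smul_eq_mul]
    ring

theorem xi_lt_xi_of_le_of_lt {g ρ a b c : ℝ} (hg : 0 < g) (ha : 0 < a) (hab : a ≤ b)
    (hbc : b < c) (hac : xi g ρ a < xi g ρ c) : xi g ρ b < xi g ρ c :=
  (convexOn_P_add hg ρ).div_lt_div_of_div_lt_div (Set.mem_univ _) (Set.mem_univ _) ha hab hbc hac

theorem P_add_mul_eq_xi_mul_mul {g ρ r : ℝ} (hr : r ≠ 0) (l : ℝ) :
    (P g r + ρ) * l = xi g ρ r * (r * l) := by
  rw [xi]; field_simp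

theorem energy_penalty_above_ree_general
    (g ρ ree : ℝ) (hg : 0 < g)
    (hree_pos : 0 < ree)
    (hree_min : ∀ s : ℝ, 0 < s → s ≠ ree → xi g ρ ree < xi g ρ s)
    (rt r l lt : ℝ) (hrt : ree ≤ rt) (hlt_r : rt < r)
    (hdata : r * l = rt * lt) (hpos : 0 < rt * lt) :
    (P g rt + ρ) * lt < (P g r + ρ) * l := by
  have hrt_pos : 0 < rt := hree_pos.trans_le hrt
  have hr_pos : 0 < r := hrt_pos.trans hlt_r
  have hxi : xi g ρ rt < xi g ρ r :=
    xi_lt_xi_of_le_of_lt hg hree_pos hrt hlt_r (hree_min r hr_pos (by linarith))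
  rw [P_add_mul_eq_xi_mul_mul hrt_pos.ne', P_add_mul_eq_xi_mul_mul hr_pos.ne', hdata]
  exact mul_lt_mul_of_pos_right hxi hpos

/-- **Strict energy penalty of on-off transmission above the EE rate (equation (21)).**
If `r_ee ≤ r̃ < r` and `l, l̃ > 0` deliver the same data amount `r l = r̃ l̃ > 0`, then
`(P(r) + ρ) l > (P(r̃) + ρ) l̃`: among strategies transmitting the same data at rates at
least `r_ee`, the lower rate strictly reduces energy. -/
theorem energy_penalty_above_ree
    (g ρ ree : ℝ) (hg : 0 < g) (hρ : 0 < ρ)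
    (hree_pos : 0 < ree)
    (hree_min : ∀ s : ℝ, 0 < s → s ≠ ree → xi g ρ ree < xi g ρ s)
    (rt r l lt : ℝ) (hrt : ree ≤ rt) (hlt_r : rt < r) (hl : 0 < l) (hlt : 0 < lt)
    (hdata : r * l = rt * lt) (hpos : 0 < rt * lt) :
    (P g rt + ρ) * lt < (P g r + ρ) * l :=
  energy_penalty_above_ree_general g ρ ree hg hree_pos hree_min rt r l lt hrt hlt_r hdata hpos
end
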